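/- arXiv:math/0612088 — 2 statements merged into one kernel-verified Lean document; each statement's English description precedes it below -/
import Mathlib

section
/- Let N = (X,T,w,w') be a Petri net and Φ(N) its associated commutative word rewriting system. The map φ sending a marking μ : X → ℕ to the element φ(μ) = Σ_{x∈X} μ(x)·x of [X], and sending the arrow of G(N) given by a transition α applicable at μ (i.e. with μ →_α ν) to the arrow (c,α) of G(Φ(N)) where c = Σ_{x∈X} (μ(x) − w(x,α))·x, is an isomorphism of graphs from G(N) to G(Φ(N)). -/
/-- A Petri net on a set `X` of places and a set `T` of transitions. -/
structure PetriNet (X T : Type) where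
  w : X → T → ℕ
  w' : T → X → ℕ

/-- A commutative word rewriting system with alphabet `X` and rules indexed by `A`. -/
structure CWRS (X A : Type) where
  src : A → X →₀ ℕ
  tgt : A → X →₀ ℕ

/-- The translation `Φ` from Petri nets to commutative word rewriting systems. -/
noncomputable def Phi {X T : Type} [Fintype X] (N : PetriNet X T) : CWRS X T where
  src α := Finsupp.equivFunOnFinite.symm fun x => N.w x α
  tgt α := Finsupp.equivFunOnFinite.symm fun x => N.w' α x

/-- Arrows of the reduction graph `G(N)` of a Petri net from marking `μ` to
marking `ν`: a transition `α` with `μ →_α ν`, i.e. `w(x,α) ≤ μ(x)` for all `x`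
and `ν(x) = μ(x) - w(x,α) + w'(α,x)`. -/
def PetriStep {X T : Type} (N : PetriNet X T) (μ ν : X → ℕ) : Type :=
  {α : T // (∀ x, N.w x α ≤ μ x) ∧ ∀ x, ν x = μ x - N.w x α + N.w' α x}

/-- Arrows of the reduction graph `G(X,R)` of a commutative word rewriting system
from `a` to `b`: a pair `(c, α)` of a context `c ∈ [X]` and a rule `α` with
`a = c + s(α)` and `b = c + t(α)`. -/
def CwrsStep {X A : Type} (S : CWRS X A) (a b : X →₀ ℕ) : Type :=
  {p : (X →₀ ℕ) × A // a = p.1 + S.src p.2 ∧ b = p.1 + S.tgt p.2}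

/-- The object part of `φ`: a marking `μ` is sent to `Σ_x μ(x)·x ∈ [X]`. -/
noncomputable def phi0 {X : Type} [Fintype X] : (X → ℕ) → (X →₀ ℕ) :=
  fun μ => Finsupp.equivFunOnFinite.symm μ

/-- The arrow part of `φ`: the arrow of `G(N)` given by a transition `α`
applicable at `μ` is sent to the arrow `(c, α)` of `G(Φ(N))` where
`c = Σ_x (μ(x) - w(x,α))·x`. -/
noncomputable def phiStep {X T : Type} [Fintype X] (N : PetriNet X T) {μ ν : X → ℕ}
    (f : PetriStep N μ ν) : CwrsStep (Phi N) (phi0 μ) (phi0 ν) :=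
  ⟨(Finsupp.equivFunOnFinite.symm fun x => μ x - N.w x f.1, f.1), by
    obtain ⟨α, h1, h2⟩ := f
    constructor <;> ext x <;>
      · have hx1 := h1 x
        have hx2 := h2 x
        simp [phi0, Phi, Finsupp.add_apply]
        omega⟩

section PhiIso

variable {X T : Type} [Fintype X]

@[simp]
lemma phi0_apply (μ : X → ℕ) (x : X) : phi0 μ x = μ x := rfl

lemma phi0_bijective : Function.Bijective (phi0 (X := X)) :=
  Finsupp.equivFunOnFinite.symm.bijective

variable (N : PetriNet X T)

lemma phi0_eq_add_src_iff (μ : X → ℕ) (c : X →₀ ℕ) (α : T) :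
    phi0 μ = c + (Phi N).src α ↔ ∀ x, μ x = c x + N.w x α := by
  simp [Finsupp.ext_iff, Phi]

lemma phi0_eq_add_tgt_iff (ν : X → ℕ) (c : X →₀ ℕ) (α : T) :
    phi0 ν = c + (Phi N).tgt α ↔ ∀ x, ν x = c x + N.w' α x := by
  simp [Finsupp.ext_iff, Phi]

lemma phiStep_injective (μ ν : X → ℕ) :
    Function.Injective fun f : PetriStep N μ ν => phiStep N f := fun _ _ hfg =>
  Subtype.ext (congrArg (fun s => s.1.2) hfg)

/-- An arrow `(c, α)` between images of markings forces `c = μ - w(·,α)`, so `α` is enabled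
at `μ` and fires to `ν`. -/
lemma phiStep_surjective (μ ν : X → ℕ) :
    Function.Surjective fun f : PetriStep N μ ν => phiStep N f := by
  rintro ⟨⟨c, α⟩, hsrc, htgt⟩
  rw [phi0_eq_add_src_iff] at hsrc
  rw [phi0_eq_add_tgt_iff] at htgt
  dsimp only at hsrc htgt
  have hc : ∀ x, c x = μ x - N.w x α := fun x => by have := hsrc x; omega
  refine ⟨⟨α, fun x => ?_, fun x => ?_⟩, ?_⟩
  · rw [hsrc x]; exact Nat.le_add_left _ _
  · rw [htgt x, hc x]
  · refine Subtype.ext (Prod.ext (Finsupp.ext fun x => ?_) rfl)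
    simp [phiStep, hc x]

end PhiIso

theorem phi_graph_iso_general {X T : Type} [Fintype X] (N : PetriNet X T) :
    Function.Bijective (phi0 (X := X)) ∧
      ∀ μ ν : X → ℕ, Function.Bijective fun f : PetriStep N μ ν => phiStep N f :=
  ⟨phi0_bijective, fun μ ν => ⟨phiStep_injective N μ ν, phiStep_surjective N μ ν⟩⟩

/-- The map `φ`, sending a marking `μ : X → ℕ` to `Σ_x μ(x)·x ∈ [X]` and the
arrow of `G(N)` given by a transition `α` applicable at `μ` to the arrow
`(Σ_x (μ(x) - w(x,α))·x, α)` of `G(Φ(N))`, is an isomorphism of graphs from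
`G(N)` to `G(Φ(N))`: it is bijective on objects and bijective on each set of
arrows (it respects sources and targets by construction). -/
theorem phi_graph_iso {X T : Type} [Fintype X] [Fintype T] (N : PetriNet X T) :
    Function.Bijective (phi0 (X := X)) ∧
      ∀ μ ν : X → ℕ, Function.Bijective fun f : PetriStep N μ ν => phiStep N f :=
  phi_graph_iso_general N
end

section
/- Let (X,R) be a commutative word rewriting system with X totally ordered and Σ²(X,R) its associated 2-polygraph. The assignments π(u ⊗ τ_{x,y} ⊗ v) = identity of π(u)+x+y+π(v) and π(u ⊗ α ⊗ v) = (π(u)+π(v), α) extend the canonical projection π : X* → [X] to a functor π from the free category on the reduction graph G(Σ²(X,R)) to the free category on the reduction graph G(X,R), and this functor is surjective: it is surjective on objects, and for every pair of objects a,b ∈ [X] and every morphism F : a → b of the free category on G(X,R) there exist objects u,v ∈ X* with π(u)=a, π(v)=b and a morphism f : u → v of the free category on G(Σ²(X,R)) with π(f) = F. -/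
universe u u' v v'

/-- Paths in a graph given by a family of arrow types `Hom`. -/
inductive GPath {Obj : Type u} (Hom : Obj → Obj → Type v) : Obj → Obj → Type (max u v)
  | nil {a : Obj} : GPath Hom a a
  | cons {a b c : Obj} (f : Hom a b) (p : GPath Hom b c) : GPath Hom a c

/-- Composition (concatenation) of paths: the morphism composition of the free
category on the graph. -/
def GPath.comp {Obj : Type u} {Hom : Obj → Obj → Type v} :
    ∀ {a b c : Obj}, GPath Hom a b → GPath Hom b c → GPath Hom a c
  | _, _, _, .nil, q => q
  | _, _, _, .cons f p, q => .cons f (p.comp q)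

/-- The canonical projection `π : X* → [X]`, sending a word to the sum of its
letters. -/
noncomputable def pi {X : Type} [DecidableEq X] (u : List X) : X →₀ ℕ :=
  Multiset.toFinsupp (u : Multiset X)

/-- The canonical representative word `ā ∈ X*` of `a ∈ [X]`. -/
noncomputable def bar {X : Type} [LinearOrder X] (a : X →₀ ℕ) : List X :=
  (Finsupp.toMultiset a).sort (· ≤ ·)

/-- The 2-cells of the 2-polygraph `Σ²(X,R)`. -/
inductive Cell2 (X A : Type)
  | tau (x y : X) (h : x ≠ y)
  | rule (α : A)

/-- The 1-source of a 2-cell. -/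
noncomputable def src1 {X A : Type} [LinearOrder X] (S : CWRS X A) : Cell2 X A → List X
  | .tau x y _ => [x, y]
  | .rule α => bar (S.src α)

/-- The 1-target of a 2-cell. -/
noncomputable def tgt1 {X A : Type} [LinearOrder X] (S : CWRS X A) : Cell2 X A → List X
  | .tau x y _ => [y, x]
  | .rule α => bar (S.tgt α)

/-- Arrows of the reduction graph `G(Σ²(X,R))` from the word `u` to the word `v`. -/
def PolyStep {X A : Type} [LinearOrder X] (S : CWRS X A) (u v : List X) : Type :=
  {t : List X × Cell2 X A × List X //
    u = t.1 ++ src1 S t.2.1 ++ t.2.2 ∧ v = t.1 ++ tgt1 S t.2.1 ++ t.2.2}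

/-!
A functor out of a free category is determined by arbitrary images of the generating arrows,
so `π` is defined step by step: a `τ`-cell only permutes letters and goes to an identity, a rule
`α` applied in context `u ⊗ _ ⊗ v` goes to the step `(π(u) + π(v), α)`.
For surjectivity a path of `G(X,R)` is lifted step by step from any word over its source. Before
a step `(c, α)` the current word `u` satisfies `π(u) = c + s(α)`, so it is a permutation of
`c̄ ⊗ s(α)-bar`; adjacent transpositions generate all permutations, so `τ`-cells rearrange `u`
into that word, at no cost in the image, and then the cell `α` applies.
-/

theorem pi_append {X : Type} [DecidableEq X] (u v : List X) : pi (u ++ v) = pi u + pi v := by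
  simp only [pi, ← Multiset.coe_add, Multiset.toFinsupp_add]

@[simp]
theorem pi_nil {X : Type} [DecidableEq X] : pi ([] : List X) = 0 := by
  simp [pi]

theorem pi_eq_pi_iff_perm {X : Type} [DecidableEq X] {u v : List X} : pi u = pi v ↔ u.Perm v :=
  Multiset.toFinsupp.injective.eq_iff.trans Multiset.coe_eq_coe

theorem pi_bar {X : Type} [LinearOrder X] (a : X →₀ ℕ) : pi (bar a) = a := by
  simp [pi, bar]

theorem pi_append_bar_append {X : Type} [LinearOrder X] (h k : List X) (a : X →₀ ℕ) :
    pi (h ++ bar a ++ k) = pi h + pi k + a := by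
  rw [pi_append, pi_append, pi_bar, add_right_comm]

namespace GPath

variable {Obj : Type u} {Hom : Obj → Obj → Type v}

@[simp]
theorem comp_nil {a b : Obj} (p : GPath Hom a b) : p.comp .nil = p := by
  induction p with
  | nil => rfl
  | cons f p ih => simp only [comp, ih]

theorem comp_assoc {a b c d : Obj} (p : GPath Hom a b) (q : GPath Hom b c) (r : GPath Hom c d) :
    (p.comp q).comp r = p.comp (q.comp r) := by
  induction p with
  | nil => rfl
  | cons f p ih => simp only [comp, ih]

theorem comp_heq_of_heq_nil {a b c : Obj} (hab : a = b) {p : GPath Hom a b}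
    (hp : HEq p (nil : GPath Hom a a)) (q : GPath Hom b c) : HEq (p.comp q) q := by
  subst hab
  cases eq_of_heq hp
  rfl

theorem cons_heq_cons {a a' b b' c c' : Obj} (ha : a = a') (hb : b = b') (hc : c = c')
    {f : Hom a b} {f' : Hom a' b'} {p : GPath Hom b c} {p' : GPath Hom b' c'}
    (hf : HEq f f') (hp : HEq p p') : HEq (cons f p) (cons f' p') := by
  subst ha hb hc
  cases eq_of_heq hf
  cases eq_of_heq hp
  rfl

end GPath

theorem CwrsStep.heq_of_val_eq {X A : Type} {S : CWRS X A} {a a' b b' : X →₀ ℕ}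
    (ha : a = a') (hb : b = b') {g : CwrsStep S a b} {g' : CwrsStep S a' b'}
    (h : g.1 = g'.1) : HEq g g' := by
  subst ha hb
  exact heq_of_eq (Subtype.ext h)

section Projection

variable {X A : Type} [LinearOrder X] (S : CWRS X A)

theorem pi_eq_of_tau {u v : List X} (h k : List X) {x y : X} (hxy : x ≠ y)
    (hu : u = h ++ src1 S (.tau x y hxy) ++ k) (hv : v = h ++ tgt1 S (.tau x y hxy) ++ k) :
    pi u = pi v := by
  subst hu hv
  exact pi_eq_pi_iff_perm.2 (((List.Perm.swap y x []).append_left h).append_right k)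

noncomputable def projStep : ∀ {u v : List X}, PolyStep S u v → GPath (CwrsStep S) (pi u) (pi v)
  | _, _, ⟨(h, .tau x y hxy, k), hu, hv⟩ => pi_eq_of_tau S h k hxy hu hv ▸ .nil
  | _, _, ⟨(h, .rule α, k), hu, hv⟩ =>
    .cons ⟨(pi h + pi k, α), by rw [hu]; exact pi_append_bar_append h k _,
      by rw [hv]; exact pi_append_bar_append h k _⟩ .nil

noncomputable def projPath :
    ∀ {u v : List X}, GPath (PolyStep S) u v → GPath (CwrsStep S) (pi u) (pi v)
  | _, _, .nil => .nil
  | _, _, .cons f p => (projStep S f).comp (projPath p)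

theorem projPath_cons {u v w : List X} (f : PolyStep S u v) (p : GPath (PolyStep S) v w) :
    projPath S (.cons f p) = (projStep S f).comp (projPath S p) := rfl

theorem projPath_single {u v : List X} (f : PolyStep S u v) :
    projPath S (.cons f .nil) = projStep S f :=
  GPath.comp_nil _

theorem projPath_comp {u v w : List X} (p : GPath (PolyStep S) u v) (q : GPath (PolyStep S) v w) :
    projPath S (p.comp q) = (projPath S p).comp (projPath S q) := by
  induction p with
  | nil => rfl
  | cons f p ih => rw [GPath.comp, projPath_cons, projPath_cons, ih, GPath.comp_assoc]

theorem projStep_heq_nil_of_tau {u v : List X} (f : PolyStep S u v) {x y : X} (hxy : x ≠ y)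
    (hf : f.1.2.1 = .tau x y hxy) :
    pi u = pi v ∧ HEq (projStep S f) (GPath.nil : GPath (CwrsStep S) (pi u) (pi u)) := by
  obtain ⟨⟨h, c, k⟩, hu, hv⟩ := f
  cases hf
  exact ⟨pi_eq_of_tau S h k hxy hu hv, eqRec_heq _ _⟩

theorem projStep_of_rule {u v : List X} (f : PolyStep S u v) {α : A} (hf : f.1.2.1 = .rule α) :
    ∃ g : CwrsStep S (pi u) (pi v),
      g.1 = (pi f.1.1 + pi f.1.2.2, α) ∧ projStep S f = .cons g .nil := by
  obtain ⟨⟨h, c, k⟩, hu, hv⟩ := f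
  cases hf
  exact ⟨_, rfl, rfl⟩

def PolyStep.whiskerLeft (w : List X) {u v : List X} :
    PolyStep S u v → PolyStep S (w ++ u) (w ++ v)
  | ⟨(h, c, k), hu, hv⟩ => ⟨(w ++ h, c, k), by simp [hu], by simp [hv]⟩

theorem PolyStep.whiskerLeft_cell (w : List X) {u v : List X} (f : PolyStep S u v) :
    (f.whiskerLeft S w).1.2.1 = f.1.2.1 := by
  obtain ⟨⟨_, _, _⟩, _, _⟩ := f
  rfl

def GPath.whiskerLeft (w : List X) : ∀ {u v : List X},
    GPath (PolyStep S) u v → GPath (PolyStep S) (w ++ u) (w ++ v)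
  | _, _, .nil => .nil
  | _, _, .cons f p => .cons (f.whiskerLeft S w) (whiskerLeft w p)

inductive IsTauPath : ∀ {u v : List X}, GPath (PolyStep S) u v → Prop
  | nil {u : List X} : IsTauPath (.nil : GPath (PolyStep S) u u)
  | cons {u v w : List X} {f : PolyStep S u v} {p : GPath (PolyStep S) v w}
      (hf : ∃ x y hxy, f.1.2.1 = .tau x y hxy) (hp : IsTauPath p) : IsTauPath (.cons f p)

variable {S}

theorem IsTauPath.whiskerLeft (w : List X) {u v : List X} {p : GPath (PolyStep S) u v}
    (hp : IsTauPath S p) : IsTauPath S (p.whiskerLeft S w) := by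
  induction hp with
  | nil => exact .nil
  | @cons _ _ _ f _ hf _ ih => exact .cons (f.whiskerLeft_cell S w ▸ hf) ih

theorem IsTauPath.comp {u v w : List X} {p : GPath (PolyStep S) u v} {q : GPath (PolyStep S) v w}
    (hp : IsTauPath S p) (hq : IsTauPath S q) : IsTauPath S (p.comp q) := by
  induction hp with
  | nil => exact hq
  | cons hf _ ih => exact .cons hf (ih hq)

theorem IsTauPath.projPath_heq_nil {u v : List X} {p : GPath (PolyStep S) u v}
    (hp : IsTauPath S p) :
    pi u = pi v ∧ HEq (projPath S p) (GPath.nil : GPath (CwrsStep S) (pi u) (pi u)) := by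
  induction hp with
  | nil => exact ⟨rfl, .rfl⟩
  | @cons _ _ _ f _ hf _ ih =>
    obtain ⟨_, _, hxy, hf⟩ := hf
    obtain ⟨hfuv, hf⟩ := projStep_heq_nil_of_tau S f hxy hf
    refine ⟨hfuv.trans ih.1, (GPath.comp_heq_of_heq_nil hfuv hf _).trans (ih.2.trans ?_)⟩
    rw [hfuv]

variable (S)

theorem exists_isTauPath_of_perm {u v : List X} (h : u.Perm v) :
    ∃ p : GPath (PolyStep S) u v, IsTauPath S p := by
  induction h with
  | nil => exact ⟨.nil, .nil⟩
  | cons x _ ih =>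
    obtain ⟨p, hp⟩ := ih
    exact ⟨p.whiskerLeft S [x], hp.whiskerLeft [x]⟩
  | swap x y l =>
    rcases eq_or_ne y x with rfl | hyx
    · exact ⟨.nil, .nil⟩
    · exact ⟨.cons ⟨([], .tau y x hyx, l), rfl, rfl⟩ .nil, .cons ⟨y, x, hyx, rfl⟩ .nil⟩
  | trans _ _ ih₁ ih₂ =>
    obtain ⟨p, hp⟩ := ih₁
    obtain ⟨q, hq⟩ := ih₂
    exact ⟨p.comp q, hp.comp hq⟩

theorem exists_projPath_heq {a b : X →₀ ℕ}
    (F : GPath (CwrsStep S) a b) (u : List X) (hu : pi u = a) :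
    ∃ (v : List X) (_ : pi v = b) (f : GPath (PolyStep S) u v), HEq (projPath S f) F := by
  induction F generalizing u with
  | nil => exact ⟨u, hu, .nil, by subst hu; rfl⟩
  | @cons a b' b g F ih =>
    obtain ⟨⟨c, α⟩, hsrc, htgt⟩ := g
    let s : PolyStep S (bar c ++ bar (S.src α)) (bar c ++ bar (S.tgt α)) :=
      ⟨(bar c, .rule α, []), (List.append_nil _).symm, (List.append_nil _).symm⟩
    have hs_src : pi (bar c ++ bar (S.src α)) = a := by rw [pi_append, pi_bar, pi_bar, hsrc]
    have hs_tgt : pi (bar c ++ bar (S.tgt α)) = b' := by rw [pi_append, pi_bar, pi_bar, htgt]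
    obtain ⟨p, hp⟩ := exists_isTauPath_of_perm S (pi_eq_pi_iff_perm.1 (hu.trans hs_src.symm))
    obtain ⟨hpuv, hp⟩ := hp.projPath_heq_nil
    obtain ⟨v, hv, f, hf⟩ := ih _ hs_tgt
    obtain ⟨g, hg, hsg⟩ := projStep_of_rule S s rfl
    refine ⟨v, hv, p.comp (.cons s f), ?_⟩
    rw [projPath_comp, projPath_cons, hsg]
    refine (GPath.comp_heq_of_heq_nil hpuv hp _).trans ?_
    refine GPath.cons_heq_cons hs_src hs_tgt hv (CwrsStep.heq_of_val_eq hs_src hs_tgt ?_) hf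
    rw [hg]
    simp only [s, pi_bar, pi_nil, add_zero]

end Projection

/-- The assignments `π(u ⊗ τ_{x,y} ⊗ v) = id_{π(u)+x+y+π(v)}` and
`π(u ⊗ α ⊗ v) = (π(u)+π(v), α)` extend the canonical projection `π : X* → [X]`
into a functor `Π` from the free category on `G(Σ²(X,R))` to the free category
on `G(X,R)` (it preserves identities and composition, and takes the stated
values on generating arrows), and this functor is surjective: `π` is surjective
on objects, and every morphism `F : a → b` of the free category on `G(X,R)` is
the image of some morphism `f : u → v` of the free category on `G(Σ²(X,R))`
with `π(u) = a` and `π(v) = b`. -/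
theorem pi_functor_surjective {X A : Type} [LinearOrder X] (S : CWRS X A) :
    ∃ Pi : ∀ u v : List X, GPath (PolyStep S) u v → GPath (CwrsStep S) (pi u) (pi v),
      (∀ u : List X, Pi u u .nil = .nil) ∧
      (∀ (u v w : List X) (p : GPath (PolyStep S) u v) (q : GPath (PolyStep S) v w),
        Pi u w (p.comp q) = (Pi u v p).comp (Pi v w q)) ∧
      (∀ (u v : List X) (f : PolyStep S u v) (x y : X) (hxy : x ≠ y),
        f.1.2.1 = Cell2.tau x y hxy →
          HEq (Pi u v (.cons f .nil)) (GPath.nil : GPath (CwrsStep S) (pi u) (pi u))) ∧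
      (∀ (u v : List X) (f : PolyStep S u v) (α : A), f.1.2.1 = Cell2.rule α →
        ∃ g : CwrsStep S (pi u) (pi v),
          g.1 = (pi f.1.1 + pi f.1.2.2, α) ∧ Pi u v (.cons f .nil) = .cons g .nil) ∧
      Function.Surjective (pi (X := X)) ∧
      (∀ (a b : X →₀ ℕ) (F : GPath (CwrsStep S) a b),
        ∃ (u v : List X) (_ : pi u = a) (_ : pi v = b) (f : GPath (PolyStep S) u v),
          HEq (Pi u v f) F) := by
  refine ⟨fun _ _ => projPath S, fun _ => rfl, fun _ _ _ => projPath_comp S, ?_, ?_,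
    fun a => ⟨bar a, pi_bar a⟩, ?_⟩
  · intro u v f x y hxy hf
    beta_reduce
    rw [projPath_single]
    exact (projStep_heq_nil_of_tau S f hxy hf).2
  · intro u v f α hf
    beta_reduce
    rw [projPath_single]
    exact projStep_of_rule S f hf
  · intro a _ F
    obtain ⟨v, hv, f, hf⟩ := exists_projPath_heq S F (bar a) (pi_bar a)
    exact ⟨bar a, v, pi_bar a, hv, f, hf⟩
end
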